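/- Let C be a category with finite products, G an internal group, and S an object of C with trivial G-action π_2. For any object Y of C and any G-object (X, a), there is a bijection, natural in Y and (X,a), between natural transformations S^X → S^Y (as presheaves on C) and natural transformations (S, π_2)^{(X,a)} → (S, π_2)^{(G × Y, m × Id_Y)} (as presheaves on [G, C]). -/

import Mathlib

open CategoryTheory CategoryTheory.Limits

universe u v

variable {C : Type u} [Category.{v} C] [HasFiniteProducts C]


/-- The presheaf `S^X : Y ↦ C(Y × X, S)`. -/
noncomputable def pow (S X : C) : Cᵒᵖ ⥤ Type v where
  obj Z := (Opposite.unop Z ⨯ X) ⟶ S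
  map f := TypeCat.ofHom fun u => prod.map f.unop (𝟙 X) ≫ u
  map_id Z := by ext u; simp
  map_comp f g := by
    ext u
    show prod.map ((f ≫ g).unop) (𝟙 X) ≫ u
      = prod.map g.unop (𝟙 X) ≫ prod.map f.unop (𝟙 X) ≫ u
    rw [← Category.assoc, prod.map_map]; simp

/-- Contravariant action `S^f : S^Y ⟶ S^X` for `f : X ⟶ Y`. -/
noncomputable def powMap (S : C) {X Y : C} (f : X ⟶ Y) : pow S Y ⟶ pow S X where
  app Z := TypeCat.ofHom fun u => prod.map (𝟙 _) f ≫ u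
  naturality Z W g := by
    ext u
    change Opposite.unop Z ⨯ Y ⟶ S at u
    show prod.map (𝟙 _) f ≫ prod.map g.unop (𝟙 Y) ≫ u
      = prod.map g.unop (𝟙 X) ≫ prod.map (𝟙 _) f ≫ u
    rw [← Category.assoc, ← Category.assoc, prod.map_map, prod.map_map]
    simp

@[simp] lemma powMap_id (S X : C) : powMap S (𝟙 X) = 𝟙 (pow S X) := by
  apply NatTrans.ext; funext Z; ext u; simp [powMap, pow]; rfl

@[simp] lemma powMap_comp (S : C) {X Y Z : C} (f : X ⟶ Y) (g : Y ⟶ Z) :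
    powMap S (f ≫ g) = powMap S g ≫ powMap S f := by
  apply NatTrans.ext; funext W; ext u
  change Opposite.unop W ⨯ Z ⟶ S at u
  show prod.map (𝟙 _) (f ≫ g) ≫ u = prod.map (𝟙 _) f ≫ prod.map (𝟙 _) g ≫ u
  rw [← Category.assoc, prod.map_map]; simp

/-- An internal group in a category with finite products. -/
structure GroupObject (C : Type u) [Category.{v} C] [HasFiniteProducts C] where
  G : C
  m : G ⨯ G ⟶ G
  e : ⊤_ C ⟶ G
  i : G ⟶ G
  mul_assoc : prod.map m (𝟙 G) ≫ m = (prod.associator G G G).hom ≫ prod.map (𝟙 G) m ≫ m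
  one_mul : prod.lift (terminal.from G ≫ e) (𝟙 G) ≫ m = 𝟙 G
  mul_one : prod.lift (𝟙 G) (terminal.from G ≫ e) ≫ m = 𝟙 G
  inv_mul : prod.lift i (𝟙 G) ≫ m = terminal.from G ≫ e
  mul_inv : prod.lift (𝟙 G) i ≫ m = terminal.from G ≫ e

variable (Gr : GroupObject C)

/-- A `G`-object: an object with a `G`-action. -/
structure GObject (Gr : GroupObject C) where
  X : C
  act : Gr.G ⨯ X ⟶ X
  act_one : prod.lift (terminal.from X ≫ Gr.e) (𝟙 X) ≫ act = 𝟙 X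
  act_mul : prod.map (𝟙 Gr.G) act ≫ act
    = (prod.associator Gr.G Gr.G X).inv ≫ prod.map Gr.m (𝟙 X) ≫ act

/-- A `G`-equivariant morphism. -/
@[ext]
structure GHom (A B : GObject Gr) where
  f : A.X ⟶ B.X
  equivariant : A.act ≫ f = prod.map (𝟙 Gr.G) f ≫ B.act

instance : Category (GObject Gr) where
  Hom A B := GHom Gr A B
  id A := ⟨𝟙 A.X, by simp⟩
  comp {A B D} u v := ⟨u.f ≫ v.f, by
    rw [← Category.assoc, u.equivariant, Category.assoc, v.equivariant,
      ← Category.assoc, prod.map_map]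
    simp⟩
  id_comp u := by apply GHom.ext; simp
  comp_id u := by apply GHom.ext; simp
  assoc u v w := by apply GHom.ext; simp

@[simp] lemma GHom.id_f (A : GObject Gr) : (𝟙 A : A ⟶ A).f = 𝟙 A.X := rfl
@[simp] lemma GHom.comp_f {A B D : GObject Gr} (u : A ⟶ B) (v : B ⟶ D) :
    (u ≫ v).f = u.f ≫ v.f := rfl

/-- The diagonal action on the product of the underlying objects of two `G`-objects. -/
noncomputable def productAction (Z Xa : GObject Gr) :
    Gr.G ⨯ (Z.X ⨯ Xa.X) ⟶ Z.X ⨯ Xa.X :=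
  prod.lift (prod.map (𝟙 Gr.G) prod.fst ≫ Z.act) (prod.map (𝟙 Gr.G) prod.snd ≫ Xa.act)

lemma productAction_natural_left {Z W : GObject Gr} (g : W ⟶ Z) (Xa : GObject Gr) :
    prod.map (𝟙 Gr.G) (prod.map g.f (𝟙 Xa.X)) ≫ productAction Gr Z Xa
      = productAction Gr W Xa ≫ prod.map g.f (𝟙 Xa.X) := by
  unfold productAction
  apply Limits.prod.hom_ext
  · simp only [Category.assoc, prod.map_fst, prod.lift_fst, prod.lift_fst_assoc,
      prod.map_fst_assoc]
    rw [g.equivariant, ← Category.assoc, ← Category.assoc, prod.map_map, prod.map_map]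
    simp
  · simp only [Category.assoc, prod.map_snd, prod.lift_snd, prod.lift_snd_assoc,
      prod.map_snd_assoc]
    rw [← Category.assoc, prod.map_map]
    simp

lemma productAction_natural_right (Z : GObject Gr) {Xa Xb : GObject Gr} (k : Xa ⟶ Xb) :
    prod.map (𝟙 Gr.G) (prod.map (𝟙 Z.X) k.f) ≫ productAction Gr Z Xb
      = productAction Gr Z Xa ≫ prod.map (𝟙 Z.X) k.f := by
  unfold productAction
  apply Limits.prod.hom_ext
  · simp only [Category.assoc, prod.map_fst, prod.lift_fst, prod.lift_fst_assoc,
      prod.map_fst_assoc]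
    rw [← Category.assoc, prod.map_map]
    simp
  · simp only [Category.assoc, prod.map_snd, prod.lift_snd, prod.lift_snd_assoc,
      prod.map_snd_assoc]
    rw [k.equivariant, ← Category.assoc, ← Category.assoc, prod.map_map, prod.map_map]
    simp

/-- The object of `G`-equivariant maps `(S,π₂)^{(X,a)}` as a presheaf on `[G,C]`,
where `S` carries the trivial action. -/
noncomputable def gpow (S : C) (Xa : GObject Gr) : (GObject Gr)ᵒᵖ ⥤ Type v where
  obj Z := { u : (Opposite.unop Z).X ⨯ Xa.X ⟶ S //
      productAction Gr (Opposite.unop Z) Xa ≫ u = prod.snd ≫ u }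
  map {Z W} g := TypeCat.ofHom fun u => ⟨prod.map g.unop.f (𝟙 Xa.X) ≫ u.1, by
    rw [← Category.assoc, ← productAction_natural_left, Category.assoc, u.2,
      ← Category.assoc, prod.map_snd, Category.assoc]⟩
  map_id Z := by ext u; simp
  map_comp f g := by
    ext u
    show prod.map (g.unop.f ≫ f.unop.f) (𝟙 Xa.X) ≫ u.1
      = prod.map g.unop.f (𝟙 Xa.X) ≫ prod.map f.unop.f (𝟙 Xa.X) ≫ u.1
    rw [← Category.assoc, prod.map_map]; simp

/-- Contravariant action of a `G`-homomorphism on `gpow`. -/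
noncomputable def gpowMap (S : C) {Xa Xb : GObject Gr} (k : Xa ⟶ Xb) :
    gpow Gr S Xb ⟶ gpow Gr S Xa where
  app Z := TypeCat.ofHom fun u => ⟨prod.map (𝟙 (Opposite.unop Z).X) k.f ≫ u.1, by
    rw [← Category.assoc, ← productAction_natural_right, Category.assoc, u.2,
      ← Category.assoc, prod.map_snd, Category.assoc]⟩
  naturality Z W g := by
    ext u; apply Subtype.ext
    show prod.map (𝟙 _) k.f ≫ prod.map g.unop.f (𝟙 Xb.X) ≫ u.1
      = prod.map g.unop.f (𝟙 Xa.X) ≫ prod.map (𝟙 _) k.f ≫ u.1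
    rw [← Category.assoc, ← Category.assoc, prod.map_map, prod.map_map]
    simp

lemma freeGObject_act_one (Gr : GroupObject C) (Y : C) :
   prod.lift (terminal.from (Gr.G ⨯ Y) ≫ Gr.e) (𝟙 (Gr.G ⨯ Y)) ≫
     ((prod.associator Gr.G Gr.G Y).inv ≫ prod.map Gr.m (𝟙 Y)) = 𝟙 (Gr.G ⨯ Y) := by
  have hfrom : terminal.from (Gr.G ⨯ Y) = (prod.fst : Gr.G ⨯ Y ⟶ Gr.G) ≫ terminal.from Gr.G :=
    Subsingleton.elim _ _
  apply Limits.prod.hom_ext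
  · simp only [prod.associator_inv, Category.assoc, prod.map_fst, prod.lift_fst,
      prod.comp_lift_assoc, prod.comp_lift, Category.comp_id, Category.id_comp,
      prod.lift_fst_assoc, prod.lift_snd, prod.lift_snd_assoc]
    rw [hfrom, Category.assoc]
    have key : (prod.fst : Gr.G ⨯ Y ⟶ Gr.G) ≫ prod.lift (terminal.from Gr.G ≫ Gr.e) (𝟙 Gr.G) ≫ Gr.m
        = prod.fst ≫ 𝟙 Gr.G := by rw [Gr.one_mul]
    rw [prod.comp_lift_assoc] at key
    simpa using key
  · simp only [prod.associator_inv, Category.assoc, prod.map_snd, prod.lift_snd,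
      prod.comp_lift_assoc, prod.comp_lift, Category.comp_id, Category.id_comp,
      prod.lift_snd_assoc]

lemma mul_assoc_elements (Gr : GroupObject C) {W : C} (x y z : W ⟶ Gr.G) :
    prod.lift (prod.lift x y ≫ Gr.m) z ≫ Gr.m = prod.lift x (prod.lift y z ≫ Gr.m) ≫ Gr.m := by
  have h := congrArg (fun k => prod.lift (prod.lift x y) z ≫ k) Gr.mul_assoc
  simpa [prod.lift_map, prod.associator_hom, prod.comp_lift, prod.comp_lift_assoc,
    Category.assoc, prod.lift_fst, prod.lift_snd, prod.lift_fst_assoc,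
    prod.lift_snd_assoc] using h

lemma freeGObject_act_mul (Gr : GroupObject C) (Y : C) :
    prod.map (𝟙 Gr.G) ((prod.associator Gr.G Gr.G Y).inv ≫ prod.map Gr.m (𝟙 Y)) ≫
        ((prod.associator Gr.G Gr.G Y).inv ≫ prod.map Gr.m (𝟙 Y))
      = (prod.associator Gr.G Gr.G (Gr.G ⨯ Y)).inv ≫ prod.map Gr.m (𝟙 (Gr.G ⨯ Y)) ≫
        ((prod.associator Gr.G Gr.G Y).inv ≫ prod.map Gr.m (𝟙 Y)) := by
  apply Limits.prod.hom_ext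
  · simp only [prod.associator_inv, Category.assoc, prod.map_fst, prod.map_snd,
      prod.lift_fst, prod.lift_snd, prod.comp_lift_assoc, prod.comp_lift,
      Category.comp_id, Category.id_comp, prod.lift_fst_assoc, prod.lift_snd_assoc,
      prod.lift_map, prod.map_map, prod.map_fst_assoc, prod.map_snd_assoc]
    rw [mul_assoc_elements]
  · simp only [prod.associator_inv, Category.assoc, prod.map_fst, prod.map_snd,
      prod.lift_fst, prod.lift_snd, prod.comp_lift_assoc, prod.comp_lift,
      Category.comp_id, Category.id_comp, prod.lift_fst_assoc, prod.lift_snd_assoc,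
      prod.lift_map, prod.map_map, prod.map_fst_assoc, prod.map_snd_assoc]

/-- The free `G`-object `(G × Y, m × Id_Y)` on an object `Y`. -/
noncomputable def freeGObject (Gr : GroupObject C) (Y : C) : GObject Gr where
  X := Gr.G ⨯ Y
  act := (prod.associator Gr.G Gr.G Y).inv ≫ prod.map Gr.m (𝟙 Y)
  act_one := freeGObject_act_one Gr Y
  act_mul := freeGObject_act_mul Gr Y

/-- The free `G`-homomorphism `G × Y ⟶ G × Y'` on `h : Y ⟶ Y'`. -/
noncomputable def freeGHom (Gr : GroupObject C) {Y Y' : C} (h : Y ⟶ Y') :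
    freeGObject Gr Y ⟶ freeGObject Gr Y' where
  f := prod.map (𝟙 Gr.G) h
  equivariant := by
    show ((prod.associator Gr.G Gr.G Y).inv ≫ prod.map Gr.m (𝟙 Y)) ≫ prod.map (𝟙 Gr.G) h
      = prod.map (𝟙 Gr.G) (prod.map (𝟙 Gr.G) h) ≫
        (prod.associator Gr.G Gr.G Y').inv ≫ prod.map Gr.m (𝟙 Y')
    apply Limits.prod.hom_ext
    · simp [prod.associator_inv, prod.comp_lift, prod.comp_lift_assoc, prod.lift_map,
        prod.map_fst_assoc, prod.map_snd_assoc, prod.map_map]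
    · simp [prod.associator_inv, prod.comp_lift, prod.comp_lift_assoc, prod.lift_map,
        prod.map_fst_assoc, prod.map_snd_assoc, prod.map_map]

/-!
A map `v : (G × c) × X ⟶ S` invariant under the diagonal action is determined by its restriction
along `c ⟶ G × c, c ↦ (e, c)`, since `v((g, c), x) = v((e, c), g⁻¹x)`; likewise an invariant
`w : Z × (G × Y) ⟶ S` satisfies `w(z, (g, y)) = w(g⁻¹z, (e, y))`. Hence `(S, π₂)^{(X, a)}`
restricted along the free functor `G × (−)` is `S^X`, and `S^Y` pulled back along the forgetful
functor is `(S, π₂)^{(G × Y, m × Id_Y)}`. Precomposition turns the adjunction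
`G × (−) ⊣ U` into an adjunction between restriction along `G × (−)` and restriction along `U`,
and its hom-equivalence, conjugated by these two isomorphisms, is the natural bijection.
-/

attribute [local simp] prod.lift_fst prod.lift_snd prod.lift_fst_assoc prod.lift_snd_assoc

lemma prod.hom_ext_of_lift {A B S : C} {f f' : A ⨯ B ⟶ S}
    (h : ∀ (W : C) (a : W ⟶ A) (b : W ⟶ B), prod.lift a b ≫ f = prod.lift a b ≫ f') :
    f = f' := by
  simpa using h _ prod.fst prod.snd

@[simp]
lemma prod.lift_comp_fst_comp_snd {W A B : C} (p : W ⟶ A ⨯ B) :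
    prod.lift (p ≫ prod.fst) (p ≫ prod.snd) = p := by
  apply prod.hom_ext <;> simp

namespace GroupObject

variable {W W' : C}

noncomputable instance homGroup : Group (W ⟶ Gr.G) where
  mul x y := prod.lift x y ≫ Gr.m
  one := terminal.from W ≫ Gr.e
  inv x := x ≫ Gr.i
  mul_assoc x y z := by
    have h := prod.lift (prod.lift x y) z ≫= Gr.mul_assoc
    simp only [prod.lift_map_assoc, prod.associator_hom, prod.comp_lift_assoc, prod.lift_fst_assoc,
      prod.lift_fst, prod.lift_snd, Category.comp_id] at h
    exact h
  one_mul x := by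
    have h := x ≫= Gr.one_mul
    simp only [prod.comp_lift_assoc, terminal.comp_from_assoc, Category.comp_id] at h
    exact h
  mul_one x := by
    have h := x ≫= Gr.mul_one
    simp only [prod.comp_lift_assoc, terminal.comp_from_assoc, Category.comp_id] at h
    exact h
  inv_mul_cancel x := by
    have h := x ≫= Gr.inv_mul
    simp only [prod.comp_lift_assoc, terminal.comp_from_assoc, Category.comp_id] at h
    exact h

variable {Gr}

lemma mul_def (x y : W ⟶ Gr.G) : x * y = prod.lift x y ≫ Gr.m := rfl

lemma one_def : (1 : W ⟶ Gr.G) = terminal.from W ≫ Gr.e := rfl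

lemma inv_def (x : W ⟶ Gr.G) : x⁻¹ = x ≫ Gr.i := rfl

@[simp] lemma comp_one (f : W' ⟶ W) : f ≫ (1 : W ⟶ Gr.G) = 1 := by
  simp [one_def]

@[simp] lemma comp_inv (f : W' ⟶ W) (x : W ⟶ Gr.G) : f ≫ x⁻¹ = (f ≫ x)⁻¹ := by
  simp [inv_def]

end GroupObject

namespace GObject

variable {Gr} {W W' : C} (Z : GObject Gr)

noncomputable def smul (g : W ⟶ Gr.G) (z : W ⟶ Z.X) : W ⟶ Z.X := prod.lift g z ≫ Z.act

@[simp]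
lemma lift_comp_act (g : W ⟶ Gr.G) (z : W ⟶ Z.X) : prod.lift g z ≫ Z.act = Z.smul g z := rfl

@[simp] lemma comp_smul (f : W' ⟶ W) (g : W ⟶ Gr.G) (z : W ⟶ Z.X) :
    f ≫ Z.smul g z = Z.smul (f ≫ g) (f ≫ z) := by
  simp only [smul, prod.comp_lift_assoc]

@[simp] lemma one_smul (z : W ⟶ Z.X) : Z.smul 1 z = z := by
  have h := z ≫= Z.act_one
  rw [prod.comp_lift_assoc, terminal.comp_from_assoc, Category.comp_id] at h
  exact h

lemma mul_smul (g h : W ⟶ Gr.G) (z : W ⟶ Z.X) : Z.smul (g * h) z = Z.smul g (Z.smul h z) := by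
  have := prod.lift g (prod.lift h z) ≫= Z.act_mul
  simp only [prod.lift_map_assoc, prod.associator_inv, prod.comp_lift_assoc, prod.lift_fst,
    prod.lift_snd, prod.lift_snd_assoc, Category.comp_id] at this
  exact this.symm

@[simp] lemma smul_inv_smul (g : W ⟶ Gr.G) (z : W ⟶ Z.X) : Z.smul g (Z.smul g⁻¹ z) = z := by
  rw [← mul_smul, mul_inv_cancel, one_smul]

end GObject

lemma GHom.smul_comp {A B : GObject Gr} (k : A ⟶ B) {W : C} (g : W ⟶ Gr.G) (x : W ⟶ A.X) :
    A.smul g x ≫ k.f = B.smul g (x ≫ k.f) := by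
  simp only [GObject.smul, Category.assoc, k.equivariant, prod.lift_map_assoc, Category.comp_id]

variable {Gr} in
@[ext]
lemma GObject.hom_ext {A B : GObject Gr} {k k' : A ⟶ B} (h : k.f = k'.f) : k = k' := GHom.ext h

variable {Gr} in
lemma productAction_comp_eq_snd_comp_iff {Z A : GObject Gr} {S : C} (u : Z.X ⨯ A.X ⟶ S) :
    productAction Gr Z A ≫ u = prod.snd ≫ u ↔
      ∀ (W : C) (g : W ⟶ Gr.G) (z : W ⟶ Z.X) (x : W ⟶ A.X),
        prod.lift (Z.smul g z) (A.smul g x) ≫ u = prod.lift z x ≫ u := by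
  constructor
  · intro hu W g z x
    simpa [productAction, prod.comp_lift_assoc] using prod.lift g (prod.lift z x) ≫= hu
  · intro hu
    refine prod.hom_ext_of_lift fun W g zx => ?_
    simpa [productAction, prod.comp_lift_assoc] using hu W g (zx ≫ prod.fst) (zx ≫ prod.snd)

/- `(freeGObject Gr Y).X` and `Gr.G ⨯ Y` agree only after unfolding, which `rw` and `simp` do not
do; `dsimp only [freeGObject_X]` first aligns the types of the morphisms in a goal. -/
lemma freeGObject_X (Y : C) : (freeGObject Gr Y).X = (Gr.G ⨯ Y) := rfl

@[simp]
lemma lift_comp_associator_inv_comp_map_mul {W Y : C} (g : W ⟶ Gr.G) (p : W ⟶ Gr.G ⨯ Y) :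
    prod.lift g p ≫ (prod.associator Gr.G Gr.G Y).inv ≫ prod.map Gr.m (𝟙 Y) =
      prod.lift (g * (p ≫ prod.fst)) (p ≫ prod.snd) := by
  apply prod.hom_ext <;>
    simp [GroupObject.mul_def, prod.associator_inv, prod.comp_lift, prod.comp_lift_assoc]

lemma freeGObject_smul {W Y : C} (g : W ⟶ Gr.G) (p : W ⟶ Gr.G ⨯ Y) :
    (freeGObject Gr Y).smul g p = prod.lift (g * (p ≫ prod.fst)) (p ≫ prod.snd) :=
  lift_comp_associator_inv_comp_map_mul Gr g p

namespace GObject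

@[simps]
noncomputable def free : C ⥤ GObject Gr where
  obj := freeGObject Gr
  map := freeGHom Gr
  map_id _ := hom_ext prod.map_id_id
  map_comp h h' := hom_ext (prod.map_id_comp h h')

@[simps]
def forget : GObject Gr ⥤ C where
  obj Z := Z.X
  map k := k.f

noncomputable def freeUnit (Y : C) : Y ⟶ Gr.G ⨯ Y := prod.lift 1 (𝟙 Y)

lemma freeUnit_naturality {Y Y' : C} (h : Y ⟶ Y') :
    h ≫ freeUnit Gr Y' = freeUnit Gr Y ≫ prod.map (𝟙 Gr.G) h := by
  apply prod.hom_ext <;> simp [freeUnit]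

variable {Gr} in
noncomputable def actHom (Z : GObject Gr) : freeGObject Gr Z.X ⟶ Z where
  f := Z.act
  equivariant := (Z.act_mul.trans (Category.assoc _ _ _).symm).symm

lemma freeGHom_freeUnit_comp_actHom (Y : C) :
    freeGHom Gr (freeUnit Gr Y) ≫ actHom (freeGObject Gr Y) = 𝟙 _ := by
  ext : 1
  change prod.map (𝟙 Gr.G) (freeUnit Gr Y) ≫ (prod.associator Gr.G Gr.G Y).inv ≫
    prod.map Gr.m (𝟙 Y) = 𝟙 (Gr.G ⨯ Y)
  refine prod.hom_ext_of_lift fun W g y => ?_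
  rw [prod.lift_map_assoc, lift_comp_associator_inv_comp_map_mul]
  simp [freeUnit]

noncomputable def freeForgetAdjunction : free Gr ⊣ forget Gr :=
  Adjunction.mkOfUnitCounit
    { unit := { app := freeUnit Gr, naturality := fun _ _ h => freeUnit_naturality Gr h }
      counit := { app := actHom, naturality := fun _ _ k => hom_ext k.equivariant.symm }
      left_triangle := by
        ext Y : 2
        exact (congrArg (freeGHom Gr (freeUnit Gr Y) ≫ ·) (Category.id_comp _)).trans
          (freeGHom_freeUnit_comp_actHom Gr Y)
      right_triangle := by
        ext Z
        exact (congrArg (freeUnit Gr Z.X ≫ ·) (Category.id_comp Z.act)).trans (Z.one_smul _) }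

noncomputable def presheafAdjunction :
    (Functor.whiskeringLeft _ _ (Type v)).obj (free Gr).op ⊣
      (Functor.whiskeringLeft _ _ (Type v)).obj (forget Gr).op :=
  (freeForgetAdjunction Gr).op.whiskerLeft (Type v)

end GObject

section Shear

variable {Gr}

open GObject (freeUnit)

/-- `(z, (g, y)) ↦ (g⁻¹z, y)` -/
noncomputable def shearRight (Z : GObject Gr) (Y : C) : Z.X ⨯ (Gr.G ⨯ Y) ⟶ Z.X ⨯ Y :=
  prod.lift (Z.smul (prod.snd ≫ prod.fst)⁻¹ prod.fst) (prod.snd ≫ prod.snd)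

/-- `((g, c), x) ↦ (c, g⁻¹x)` -/
noncomputable def shearLeft (c : C) (A : GObject Gr) : (Gr.G ⨯ c) ⨯ A.X ⟶ c ⨯ A.X :=
  prod.lift (prod.fst ≫ prod.snd) (A.smul (prod.fst ≫ prod.fst)⁻¹ prod.snd)

@[simp]
lemma lift_comp_shearRight {Z : GObject Gr} {Y W : C} (z : W ⟶ Z.X) (p : W ⟶ Gr.G ⨯ Y) :
    prod.lift z p ≫ shearRight Z Y = prod.lift (Z.smul (p ≫ prod.fst)⁻¹ z) (p ≫ prod.snd) := by
  simp [shearRight, prod.comp_lift]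

@[simp]
lemma lift_comp_shearLeft {c W : C} {A : GObject Gr} (p : W ⟶ Gr.G ⨯ c) (x : W ⟶ A.X) :
    prod.lift p x ≫ shearLeft c A = prod.lift (p ≫ prod.snd) (A.smul (p ≫ prod.fst)⁻¹ x) := by
  simp [shearLeft, prod.comp_lift]

@[simp]
lemma lift_comp_shearRight_assoc {Z : GObject Gr} {Y W T : C} (z : W ⟶ Z.X) (p : W ⟶ Gr.G ⨯ Y)
    (u : Z.X ⨯ Y ⟶ T) :
    prod.lift z p ≫ shearRight Z Y ≫ u =
      prod.lift (Z.smul (p ≫ prod.fst)⁻¹ z) (p ≫ prod.snd) ≫ u := by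
  rw [← Category.assoc, lift_comp_shearRight]

@[simp]
lemma lift_comp_shearLeft_assoc {c W T : C} {A : GObject Gr} (p : W ⟶ Gr.G ⨯ c) (x : W ⟶ A.X)
    (u : c ⨯ A.X ⟶ T) :
    prod.lift p x ≫ shearLeft c A ≫ u = prod.lift (p ≫ prod.snd) (A.smul (p ≫ prod.fst)⁻¹ x) ≫ u := by
  rw [← Category.assoc, lift_comp_shearLeft]

lemma shearRight_comp_invariant (Z : GObject Gr) {Y S : C} (u : Z.X ⨯ Y ⟶ S) :
    productAction Gr Z (freeGObject Gr Y) ≫ shearRight Z Y ≫ u =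
      prod.snd ≫ shearRight Z Y ≫ u := by
  refine (productAction_comp_eq_snd_comp_iff _).2 fun W g z p => ?_
  dsimp only [freeGObject_X] at p ⊢
  rw [freeGObject_smul]
  simp [← GObject.mul_smul, mul_assoc]

lemma shearLeft_comp_invariant {c S : C} (A : GObject Gr) (u : c ⨯ A.X ⟶ S) :
    productAction Gr (freeGObject Gr c) A ≫ shearLeft c A ≫ u =
      prod.snd ≫ shearLeft c A ≫ u := by
  refine (productAction_comp_eq_snd_comp_iff _).2 fun W g p x => ?_
  dsimp only [freeGObject_X] at p ⊢
  rw [freeGObject_smul]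
  simp [← GObject.mul_smul, mul_assoc]

lemma map_freeUnit_comp_shearRight (Z : GObject Gr) (Y : C) :
    prod.map (𝟙 Z.X) (freeUnit Gr Y) ≫ shearRight Z Y = 𝟙 _ := by
  refine prod.hom_ext_of_lift fun W z y => ?_
  simp [freeUnit]

lemma map_freeUnit_comp_shearLeft (c : C) (A : GObject Gr) :
    prod.map (freeUnit Gr c) (𝟙 A.X) ≫ shearLeft c A = 𝟙 _ := by
  refine prod.hom_ext_of_lift fun W y x => ?_
  simp [freeUnit]

lemma shearRight_comp_map_freeUnit_comp {Z : GObject Gr} {Y S : C}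
    {w : Z.X ⨯ (Gr.G ⨯ Y) ⟶ S}
    (hw : productAction Gr Z (freeGObject Gr Y) ≫ w = prod.snd ≫ w) :
    shearRight Z Y ≫ prod.map (𝟙 Z.X) (freeUnit Gr Y) ≫ w = w := by
  refine prod.hom_ext_of_lift fun W z p => ?_
  have h := (productAction_comp_eq_snd_comp_iff (A := freeGObject Gr Y) w).1 hw W (p ≫ prod.fst)
    (Z.smul (p ≫ prod.fst)⁻¹ z) (p ≫ prod.snd ≫ freeUnit Gr Y)
  dsimp only [freeGObject_X] at h
  rw [freeGObject_smul] at h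
  simpa [freeUnit] using h.symm

lemma shearLeft_comp_map_freeUnit_comp {c S : C} {A : GObject Gr} {v : (Gr.G ⨯ c) ⨯ A.X ⟶ S}
    (hv : productAction Gr (freeGObject Gr c) A ≫ v = prod.snd ≫ v) :
    shearLeft c A ≫ prod.map (freeUnit Gr c) (𝟙 A.X) ≫ v = v := by
  refine prod.hom_ext_of_lift fun W p x => ?_
  have h := (productAction_comp_eq_snd_comp_iff (Z := freeGObject Gr c) v).1 hv W (p ≫ prod.fst)
    (p ≫ prod.snd ≫ freeUnit Gr c) (A.smul (p ≫ prod.fst)⁻¹ x)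
  dsimp only [freeGObject_X] at h
  rw [freeGObject_smul] at h
  simpa [freeUnit] using h.symm

lemma shearRight_naturality {Z Z' : GObject Gr} (k : Z' ⟶ Z) (Y : C) :
    shearRight Z' Y ≫ prod.map k.f (𝟙 Y) = prod.map k.f (𝟙 (Gr.G ⨯ Y)) ≫ shearRight Z Y := by
  refine prod.hom_ext_of_lift fun W z p => ?_
  simp [GHom.smul_comp]

lemma shearRight_comp_map_id (Z : GObject Gr) {Y Y' : C} (h : Y ⟶ Y') :
    shearRight Z Y ≫ prod.map (𝟙 Z.X) h =
      prod.map (𝟙 Z.X) (prod.map (𝟙 Gr.G) h) ≫ shearRight Z Y' := by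
  refine prod.hom_ext_of_lift fun W z p => ?_
  simp

end Shear

section PresheafIsos

variable {Gr}

open Opposite GObject

noncomputable def gpowFreeObjEquiv (S : C) (A : GObject Gr) (c : C) :
    (gpow Gr S A).obj (op (freeGObject Gr c)) ≃ (pow S A.X).obj (op c) where
  toFun v := prod.map (freeUnit Gr c) (𝟙 A.X) ≫ v.1
  invFun u := ⟨shearLeft c A ≫ u, shearLeft_comp_invariant A u⟩
  left_inv v := Subtype.ext (shearLeft_comp_map_freeUnit_comp v.2)
  right_inv u := (reassoc_of% map_freeUnit_comp_shearLeft c A) u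

noncomputable def freeOpCompGpowIso (S : C) (A : GObject Gr) :
    (free Gr).op ⋙ gpow Gr S A ≅ pow S A.X :=
  NatIso.ofComponents (fun c => (gpowFreeObjEquiv S A c.unop).toIso) fun {c c'} f => by
    have key : prod.map (freeUnit Gr c'.unop) (𝟙 A.X) ≫
        prod.map (prod.map (𝟙 Gr.G) f.unop) (𝟙 A.X) =
          prod.map f.unop (𝟙 A.X) ≫ prod.map (freeUnit Gr c.unop) (𝟙 A.X) := by
      simp [freeUnit_naturality]
    ext v
    exact (reassoc_of% key) v.1

lemma whiskerLeft_gpowMap_comp_freeOpCompGpowIso_hom (S : C) {A B : GObject Gr} (k : A ⟶ B) :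
    Functor.whiskerLeft (free Gr).op (gpowMap Gr S k) ≫ (freeOpCompGpowIso S A).hom =
      (freeOpCompGpowIso S B).hom ≫ powMap S k.f := by
  have key (c : C) : prod.map (freeUnit Gr c) (𝟙 A.X) ≫ prod.map (𝟙 _) k.f =
      prod.map (𝟙 c) k.f ≫ prod.map (freeUnit Gr c) (𝟙 B.X) := by
    simp
  ext c v
  exact (reassoc_of% key c.unop) v.1

noncomputable def powForgetObjEquiv (S Y : C) (Z : GObject Gr) :
    (pow S Y).obj (op Z.X) ≃ (gpow Gr S (freeGObject Gr Y)).obj (op Z) where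
  toFun u := ⟨shearRight Z Y ≫ u, shearRight_comp_invariant Z u⟩
  invFun w := prod.map (𝟙 Z.X) (freeUnit Gr Y) ≫ w.1
  left_inv u := (reassoc_of% map_freeUnit_comp_shearRight Z Y) u
  right_inv w := Subtype.ext (shearRight_comp_map_freeUnit_comp w.2)

noncomputable def forgetOpCompPowIso (S Y : C) :
    (forget Gr).op ⋙ pow S Y ≅ gpow Gr S (freeGObject Gr Y) :=
  NatIso.ofComponents (fun Z => (powForgetObjEquiv S Y Z.unop).toIso) fun {Z Z'} k => by
    ext u
    exact Subtype.ext ((reassoc_of% (shearRight_naturality k.unop Y)) u)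

lemma whiskerLeft_powMap_comp_forgetOpCompPowIso_hom (S : C) {Y Y' : C} (h : Y ⟶ Y') :
    Functor.whiskerLeft (forget Gr).op (powMap S h) ≫ (forgetOpCompPowIso S Y).hom =
      (forgetOpCompPowIso S Y').hom ≫ gpowMap Gr S (freeGHom Gr h) := by
  ext Z u
  exact Subtype.ext ((reassoc_of% (shearRight_comp_map_id Z.unop h)) u)

end PresheafIsos

section Bijection

variable {Gr}

noncomputable def powHomEquivGpowHom (S : C) (A : GObject Gr) (Y : C) :
    (pow S A.X ⟶ pow S Y) ≃ (gpow Gr S A ⟶ gpow Gr S (freeGObject Gr Y)) :=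
  (freeOpCompGpowIso S A).homFromEquiv.symm.trans
    (((GObject.presheafAdjunction Gr).homEquiv _ _).trans (forgetOpCompPowIso S Y).homToEquiv)

lemma powHomEquivGpowHom_apply (S : C) (A : GObject Gr) (Y : C) (δ : pow S A.X ⟶ pow S Y) :
    powHomEquivGpowHom S A Y δ =
      (GObject.presheafAdjunction Gr).homEquiv _ _ ((freeOpCompGpowIso S A).hom ≫ δ) ≫
        (forgetOpCompPowIso S Y).hom :=
  rfl

lemma powHomEquivGpowHom_comp_powMap (S : C) (A : GObject Gr) {Y Y' : C} (h : Y ⟶ Y')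
    (δ : pow S A.X ⟶ pow S Y') :
    powHomEquivGpowHom S A Y (δ ≫ powMap S h) =
      powHomEquivGpowHom S A Y' δ ≫ gpowMap Gr S (freeGHom Gr h) := by
  rw [powHomEquivGpowHom_apply, powHomEquivGpowHom_apply, ← Category.assoc,
    Adjunction.homEquiv_naturality_right, Category.assoc, Category.assoc]
  exact congrArg _ (whiskerLeft_powMap_comp_forgetOpCompPowIso_hom S h)

lemma powHomEquivGpowHom_powMap_comp (S : C) {A B : GObject Gr} (k : A ⟶ B) (Y : C)
    (δ : pow S A.X ⟶ pow S Y) :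
    powHomEquivGpowHom S B Y (powMap S k.f ≫ δ) =
      gpowMap Gr S k ≫ powHomEquivGpowHom S A Y δ := by
  rw [powHomEquivGpowHom_apply, powHomEquivGpowHom_apply, ← Category.assoc,
    ← whiskerLeft_gpowMap_comp_freeOpCompGpowIso_hom, Category.assoc,
    ← Category.assoc (gpowMap Gr S k)]
  exact congrArg (· ≫ _) ((GObject.presheafAdjunction Gr).homEquiv_naturality_left _ _)

end Bijection

/-- For any object `Y` of `C` and any `G`-object `(X, a)`, there is a bijection, natural
in `Y` and `(X,a)`, between natural transformations `S^X ⟶ S^Y` of presheaves on `C` and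
natural transformations `(S,π₂)^{(X,a)} ⟶ (S,π₂)^{(G × Y, m × Id_Y)}` of presheaves
on `[G, C]`. -/
theorem gpow_free_bijection (Gr : GroupObject C) (S : C) :
    ∃ e : ∀ (Xa : GObject Gr) (Y : C),
        (pow S Xa.X ⟶ pow S Y) ≃ (gpow Gr S Xa ⟶ gpow Gr S (freeGObject Gr Y)),
      (∀ (Xa : GObject Gr) {Y Y' : C} (h : Y ⟶ Y') (δ : pow S Xa.X ⟶ pow S Y'),
          e Xa Y (δ ≫ powMap S h) = e Xa Y' δ ≫ gpowMap Gr S (freeGHom Gr h)) ∧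
      (∀ {Xa Xa' : GObject Gr} (k : Xa ⟶ Xa') (Y : C) (δ : pow S Xa.X ⟶ pow S Y),
          e Xa' Y (powMap S k.f ≫ δ) = gpowMap Gr S k ≫ e Xa Y δ) :=
  ⟨powHomEquivGpowHom S, powHomEquivGpowHom_comp_powMap S, powHomEquivGpowHom_powMap_comp S⟩
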